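/- arXiv:1912.03114 — 9 statements merged into one kernel-verified Lean document; each statement's English description precedes it below -/
import Mathlib

section
/- For a unit speed plane curve γ with nowhere-vanishing curvature, a point s₀ is a singular point of the pedal Pe_γ (i.e. Pe_γ'(s₀) = 0) if and only if γ(s₀) = 0. -/
/-- For a unit speed plane curve γ with nowhere-vanishing curvature,
s₀ is a singular point of the pedal Pe_γ iff γ(s₀) = 0. -/
theorem stmt_1 (γ : ℝ → ℝ × ℝ) (hγ : ContDiff ℝ (⊤ : ℕ∞) γ)
    (hunit : ∀ s, (deriv γ s).1 ^ 2 + (deriv γ s).2 ^ 2 = 1)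
    (hκ : ∀ s, (deriv γ s).1 * (deriv (deriv γ) s).2
        - (deriv (deriv γ) s).1 * (deriv γ s).2 ≠ 0)
    (s₀ : ℝ) :
    deriv (fun u : ℝ =>
      ((γ u).1 * (-(deriv γ u).2) + (γ u).2 * (deriv γ u).1) •
        (-(deriv γ u).2, (deriv γ u).1)) s₀ = 0 ↔ γ s₀ = 0 := by
  have hx : ContDiff ℝ ((⊤ : ℕ∞) : WithTop ℕ∞) (fun u => (γ u).1) :=
    (contDiff_fst.comp hγ).of_le (by simp)
  have hy : ContDiff ℝ ((⊤ : ℕ∞) : WithTop ℕ∞) (fun u => (γ u).2) :=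
    (contDiff_snd.comp hγ).of_le (by simp)
  have hdx : Differentiable ℝ (fun u => (γ u).1) := hx.differentiable (by simp)
  have hdy : Differentiable ℝ (fun u => (γ u).2) := hy.differentiable (by simp)
  have hx' : ContDiff ℝ ((⊤ : ℕ∞) : WithTop ℕ∞) (deriv fun u => (γ u).1) := (contDiff_infty_iff_deriv.mp hx).2
  have hy' : ContDiff ℝ ((⊤ : ℕ∞) : WithTop ℕ∞) (deriv fun u => (γ u).2) := (contDiff_infty_iff_deriv.mp hy).2
  have hdx' : Differentiable ℝ (deriv fun u => (γ u).1) := hx'.differentiable (by simp)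
  have hdy' : Differentiable ℝ (deriv fun u => (γ u).2) := hy'.differentiable (by simp)
  have hγd : ∀ u, deriv γ u
      = (deriv (fun v => (γ v).1) u, deriv (fun v => (γ v).2) u) := by
    intro u
    have h := ((hdx u).hasDerivAt).prodMk ((hdy u).hasDerivAt)
    simp only [Prod.mk.eta] at h
    exact h.deriv
  have hγdd : ∀ u, deriv (deriv γ) u
      = (deriv (deriv fun v => (γ v).1) u, deriv (deriv fun v => (γ v).2) u) := by
    intro u
    have heq : deriv γ = fun v => (deriv (fun w => (γ w).1) v, deriv (fun w => (γ w).2) v) :=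
      funext hγd
    rw [heq]
    exact (((hdx' u).hasDerivAt).prodMk ((hdy' u).hasDerivAt)).deriv
  have hunit' : ∀ s, (deriv (fun v => (γ v).1) s) ^ 2 + (deriv (fun v => (γ v).2) s) ^ 2 = 1 := by
    intro s
    have h := hunit s
    rw [hγd s] at h
    exact h
  have horth : deriv (fun v => (γ v).1) s₀ * deriv (deriv fun v => (γ v).1) s₀
      + deriv (fun v => (γ v).2) s₀ * deriv (deriv fun v => (γ v).2) s₀ = 0 := by
    have h1 : HasDerivAt
        (fun s => (deriv (fun v => (γ v).1) s) ^ 2 + (deriv (fun v => (γ v).2) s) ^ 2)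
        ((2 : ℕ) * deriv (fun v => (γ v).1) s₀ ^ 1 * deriv (deriv fun v => (γ v).1) s₀
          + (2 : ℕ) * deriv (fun v => (γ v).2) s₀ ^ 1 * deriv (deriv fun v => (γ v).2) s₀) s₀ :=
      ((hdx' s₀).hasDerivAt.pow 2).add ((hdy' s₀).hasDerivAt.pow 2)
    have h2 : (fun s => (deriv (fun v => (γ v).1) s) ^ 2 + (deriv (fun v => (γ v).2) s) ^ 2)
        = fun _ => (1 : ℝ) := funext hunit'
    have h3 := h1.deriv
    rw [h2, deriv_const] at h3
    simp only [pow_one, Nat.cast_ofNat] at h3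
    linarith
  have hκ' : deriv (fun v => (γ v).1) s₀ * deriv (deriv fun v => (γ v).2) s₀
      - deriv (deriv fun v => (γ v).1) s₀ * deriv (fun v => (γ v).2) s₀ ≠ 0 := by
    have h := hκ s₀
    rw [hγd s₀, hγdd s₀] at h
    exact h
  -- rewrite the pedal map componentwise
  have hFeq : (fun u : ℝ =>
      ((γ u).1 * (-(deriv γ u).2) + (γ u).2 * (deriv γ u).1) •
        (-(deriv γ u).2, (deriv γ u).1))
      = fun u : ℝ =>
        (((γ u).1 * (-(deriv (fun v => (γ v).2) u)) + (γ u).2 * deriv (fun v => (γ v).1) u)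
            * (-(deriv (fun v => (γ v).2) u)),
         ((γ u).1 * (-(deriv (fun v => (γ v).2) u)) + (γ u).2 * deriv (fun v => (γ v).1) u)
            * deriv (fun v => (γ v).1) u) := by
    funext u
    rw [hγd u]
    simp [Prod.smul_mk, smul_eq_mul]
  have hp : HasDerivAt
      (fun u => (γ u).1 * (-(deriv (fun v => (γ v).2) u)) + (γ u).2 * deriv (fun v => (γ v).1) u)
      (deriv (fun v => (γ v).1) s₀ * (-(deriv (fun v => (γ v).2) s₀))
        + (γ s₀).1 * (-(deriv (deriv fun v => (γ v).2) s₀))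
        + (deriv (fun v => (γ v).2) s₀ * deriv (fun v => (γ v).1) s₀
          + (γ s₀).2 * deriv (deriv fun v => (γ v).1) s₀)) s₀ :=
    (((hdx s₀).hasDerivAt.mul ((hdy' s₀).hasDerivAt.neg)).add
      ((hdy s₀).hasDerivAt.mul (hdx' s₀).hasDerivAt))
  have hF1 := hp.mul ((hdy' s₀).hasDerivAt.neg)
  have hF2 := hp.mul (hdx' s₀).hasDerivAt
  have hF := (hF1.prodMk hF2).deriv
  simp only [Pi.mul_apply, Pi.neg_apply] at hF
  rw [hFeq, hF]
  set a := (γ s₀).1 with ha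
  set b := (γ s₀).2 with hb
  set t1 := deriv (fun v => (γ v).1) s₀ with ht1
  set t2 := deriv (fun v => (γ v).2) s₀ with ht2
  set u1 := deriv (deriv fun v => (γ v).1) s₀ with hu1
  set u2 := deriv (deriv fun v => (γ v).2) s₀ with hu2
  have hunit0 : t1 ^ 2 + t2 ^ 2 = 1 := hunit' s₀
  rw [Prod.ext_iff, Prod.ext_iff]
  simp only [Prod.fst_zero, Prod.snd_zero]
  constructor
  · rintro ⟨hA, hB⟩
    have hP' : t1 * -t2 + a * -u2 + (t2 * t1 + b * u1) = 0 := by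
      linear_combination t1 * hB - t2 * hA
        - (t1 * -t2 + a * -u2 + (t2 * t1 + b * u1)) * hunit0
        - (a * -t2 + b * t1) * horth
    have hP : (a * -t2 + b * t1) * (t1 * u2 - u1 * t2) = 0 := by
      linear_combination (-t2) * hB - t1 * hA
    have hp0 : a * -t2 + b * t1 = 0 := by
      rcases mul_eq_zero.mp hP with h | h
      · exact h
      · exact absurd h hκ'
    have hA0 : a * (t1 * u2 - u1 * t2) = 0 := by
      linear_combination u1 * hp0 - t1 * hP'
    have hB0 : b * (t1 * u2 - u1 * t2) = 0 := by
      linear_combination u2 * hp0 - t2 * hP'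
    exact ⟨(mul_eq_zero.mp hA0).resolve_right hκ', (mul_eq_zero.mp hB0).resolve_right hκ'⟩
  · rintro ⟨hA, hB⟩
    rw [ha, hb, hA, hB]
    constructor <;> ring
end

section
/- For a unit speed plane curve γ with ⟨γ(s), n(s)⟩ ≠ 0, the anti-pedal APe_γ(s) = n(s)/⟨γ(s), n(s)⟩ satisfies Ψ ∘ APe_γ = Pe_γ and Ψ ∘ Pe_γ = APe_γ, where Pe_γ(s) = ⟨γ(s), n(s)⟩ n(s) and Ψ(x) = x/‖x‖². -/
/-- For a unit speed curve γ with ⟨γ,n⟩ ≠ 0, the anti-pedal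
APe_γ = n/⟨γ,n⟩ satisfies Ψ ∘ APe_γ = Pe_γ and Ψ ∘ Pe_γ = APe_γ. -/
theorem stmt_3 (γ : ℝ → ℝ × ℝ) (hγ : ContDiff ℝ (⊤ : ℕ∞) γ)
    (hunit : ∀ s, (deriv γ s).1 ^ 2 + (deriv γ s).2 ^ 2 = 1)
    (n : ℝ → ℝ × ℝ) (hn : ∀ s, n s = (-(deriv γ s).2, (deriv γ s).1))
    (hdot : ∀ s, (γ s).1 * (n s).1 + (γ s).2 * (n s).2 ≠ 0)
    (Ψ : ℝ × ℝ → ℝ × ℝ)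
    (hΨ : ∀ p : ℝ × ℝ, Ψ p = (p.1 / (p.1 ^ 2 + p.2 ^ 2), p.2 / (p.1 ^ 2 + p.2 ^ 2)))
    (Pe APe : ℝ → ℝ × ℝ)
    (hPe : ∀ s, Pe s = ((γ s).1 * (n s).1 + (γ s).2 * (n s).2) • n s)
    (hAPe : ∀ s, APe s = ((γ s).1 * (n s).1 + (γ s).2 * (n s).2)⁻¹ • n s) :
    Ψ ∘ APe = Pe ∧ Ψ ∘ Pe = APe := by
  have key : ∀ s, (n s).1 ^ 2 + (n s).2 ^ 2 = 1 := by
    intro s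
    rw [hn]
    simpa [add_comm] using hunit s
  constructor <;> funext s <;>
  · have h := hdot s
    have k := key s
    set d := (γ s).1 * (n s).1 + (γ s).2 * (n s).2 with hd
    simp only [Function.comp_apply, hΨ, hPe, hAPe, Prod.smul_fst, Prod.smul_snd,
      smul_eq_mul, Prod.ext_iff]
    rw [← hd]
    first
    | · have e : (d⁻¹ * (n s).1) ^ 2 + (d⁻¹ * (n s).2) ^ 2 = (d⁻¹) ^ 2 := by
          rw [mul_pow, mul_pow, ← mul_add, k, mul_one]
        rw [e]
        constructor <;> field_simp <;> ring
    | · have e : (d * (n s).1) ^ 2 + (d * (n s).2) ^ 2 = d ^ 2 := by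
          rw [mul_pow, mul_pow, ← mul_add, k, mul_one]
        rw [e]
        constructor <;> field_simp <;> ring
end

section
/- For a unit speed plane curve γ with ⟨γ(s), n(s)⟩ ≠ 0, the primitive Pr_γ(s) = 2γ(s) - (‖γ(s)‖²/⟨γ(s), n(s)⟩) n(s) equals the anti-pedal of the inverted curve: Pr_γ(s) = APe_{Ψ∘γ}(s), where the unit normal of Ψ∘γ is used in the anti-pedal construction. -/
/-- For a unit speed curve γ not through the origin with ⟨γ,n⟩ ≠ 0,
the primitive Pr_γ(s) = 2γ(s) - (‖γ(s)‖²/⟨γ(s),n(s)⟩) n(s) equals the anti-pedal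
of the inverted curve δ = Ψ∘γ, computed with the unit normal ν of δ. -/
theorem stmt_4 (γ δ n ν : ℝ → ℝ × ℝ) (hγ : ContDiff ℝ (⊤ : ℕ∞) γ)
    (hunit : ∀ s, (deriv γ s).1 ^ 2 + (deriv γ s).2 ^ 2 = 1)
    (hn : ∀ s, n s = (-(deriv γ s).2, (deriv γ s).1))
    (hne : ∀ s, γ s ≠ 0)
    (hdot : ∀ s, (γ s).1 * (n s).1 + (γ s).2 * (n s).2 ≠ 0)
    (hδ : ∀ s, δ s = ((γ s).1 / ((γ s).1 ^ 2 + (γ s).2 ^ 2),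
                      (γ s).2 / ((γ s).1 ^ 2 + (γ s).2 ^ 2)))
    (hν : ∀ s, ν s = (Real.sqrt ((deriv δ s).1 ^ 2 + (deriv δ s).2 ^ 2))⁻¹ •
      ((-(deriv δ s).2, (deriv δ s).1) : ℝ × ℝ)) :
    ∀ s, (2 : ℝ) • γ s
        - (((γ s).1 ^ 2 + (γ s).2 ^ 2) / ((γ s).1 * (n s).1 + (γ s).2 * (n s).2)) • n s
      = ((δ s).1 * (ν s).1 + (δ s).2 * (ν s).2)⁻¹ • ν s := by
  intro s
  have hdγ : HasDerivAt γ (deriv γ s) s := ((hγ.differentiable (by simp)) s).hasDerivAt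
  have hdx : HasDerivAt (fun t => (γ t).1) (deriv γ s).1 s := hdγ.fst
  have hdy : HasDerivAt (fun t => (γ t).2) (deriv γ s).2 s := hdγ.snd
  set x := (γ s).1 with hxdef
  set y := (γ s).2 with hydef
  set x' := (deriv γ s).1 with hx'def
  set y' := (deriv γ s).2 with hy'def
  have hrpos : 0 < x ^ 2 + y ^ 2 := by
    have h := hne s
    have hxy : x ≠ 0 ∨ y ≠ 0 := by
      by_contra hc
      push_neg at hc
      exact h (Prod.ext hc.1 hc.2)
    rcases hxy with h1 | h1
    · nlinarith [sq_nonneg y, sq_pos_of_ne_zero h1]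
    · nlinarith [sq_nonneg x, sq_pos_of_ne_zero h1]
  have hr : x ^ 2 + y ^ 2 ≠ 0 := ne_of_gt hrpos
  have hdr : HasDerivAt (fun t => (γ t).1 ^ 2 + (γ t).2 ^ 2) (2*x*x' + 2*y*y') s := by
    have h : HasDerivAt (fun t => (γ t).1 ^ 2 + (γ t).2 ^ 2) _ s := ((hdx.pow 2).add (hdy.pow 2))
    convert h using 1
    push_cast; ring
  have hd1 : HasDerivAt (fun t => (γ t).1 / ((γ t).1 ^ 2 + (γ t).2 ^ 2))
      ((x' * (x ^ 2 + y ^ 2) - x * (2*x*x' + 2*y*y')) / (x ^ 2 + y ^ 2) ^ 2) s :=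
    hdx.div hdr hr
  have hd2 : HasDerivAt (fun t => (γ t).2 / ((γ t).1 ^ 2 + (γ t).2 ^ 2))
      ((y' * (x ^ 2 + y ^ 2) - y * (2*x*x' + 2*y*y')) / (x ^ 2 + y ^ 2) ^ 2) s :=
    hdy.div hdr hr
  have hδfun : δ = fun t => (((γ t).1 / ((γ t).1 ^ 2 + (γ t).2 ^ 2) : ℝ),
      ((γ t).2 / ((γ t).1 ^ 2 + (γ t).2 ^ 2) : ℝ)) := funext hδ
  set d1 : ℝ := (x' * (x ^ 2 + y ^ 2) - x * (2*x*x' + 2*y*y')) / (x ^ 2 + y ^ 2) ^ 2 with hd1def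
  set d2 : ℝ := (y' * (x ^ 2 + y ^ 2) - y * (2*x*x' + 2*y*y')) / (x ^ 2 + y ^ 2) ^ 2 with hd2def
  have hdδ : HasDerivAt δ (d1, d2) s := by
    rw [hδfun]; exact hd1.prodMk hd2
  have hderiv : deriv δ s = (d1, d2) := hdδ.deriv
  have hu : x' ^ 2 + y' ^ 2 = 1 := hunit s
  have hS : d1 ^ 2 + d2 ^ 2 = ((x ^ 2 + y ^ 2)⁻¹) ^ 2 := by
    rw [hd1def, hd2def]
    field_simp
    nlinarith [hu, sq_nonneg (x^2+y^2)]
  have hSpos : 0 < d1 ^ 2 + d2 ^ 2 := by rw [hS]; positivity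
  have hsqrt : Real.sqrt (d1 ^ 2 + d2 ^ 2) ≠ 0 := by positivity
  set c : ℝ := (Real.sqrt (d1 ^ 2 + d2 ^ 2))⁻¹ with hcdef
  have hc : c ≠ 0 := inv_ne_zero hsqrt
  have hp : y * x' - x * y' ≠ 0 := fun heq =>
    (hdot s) (by rw [hn s]; show x * -y' + y * x' = 0; linarith)
  set Q : ℝ := (y * x' - x * y') / (x ^ 2 + y ^ 2) ^ 2 with hQdef
  have hQne : Q ≠ 0 := div_ne_zero hp (by positivity)
  have hνs : ν s = c • ((-d2, d1) : ℝ × ℝ) := by rw [hν s, hderiv]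
  have hdot2 : (x / (x ^ 2 + y ^ 2)) * (c * -d2) + (y / (x ^ 2 + y ^ 2)) * (c * d1)
      = c * Q := by
    rw [hd1def, hd2def, hQdef]
    field_simp
    ring
  have key : ((δ s).1 * (ν s).1 + (δ s).2 * (ν s).2)⁻¹ • ν s
      = Q⁻¹ • ((-d2, d1) : ℝ × ℝ) := by
    rw [hνs, hδ s]
    simp only [Prod.smul_mk, smul_eq_mul]
    rw [hdot2, mul_inv]
    refine Prod.ext ?_ ?_ <;> simp only [Prod.smul_mk, smul_eq_mul] <;>
      (field_simp [hc]; try ring)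
  have hp2 : x * -y' + y * x' ≠ 0 := fun h => hp (by linarith)
  have hp3 : -(x * y') + y * x' ≠ 0 := fun h => hp (by linarith)
  rw [key, hn s, show γ s = (x, y) from rfl, ← hx'def, ← hy'def]
  refine Prod.ext ?_ ?_ <;>
    simp only [Prod.smul_mk, Prod.mk_sub_mk, smul_eq_mul, Prod.smul_fst, Prod.smul_snd,
      Prod.fst_sub, Prod.snd_sub] <;>
    simp only [hQdef, hd1def, hd2def] <;> field_simp [hp, hp2, hp3] <;> ring
end

section
/- For a Legendrian curve (γ, ν): I → ℝ² × S¹ (i.e. ⟨γ'(t), ν(t)⟩ = 0 for all t) with ⟨γ(t), ν(t)⟩ ≠ 0, the primitive 𝒫r_γ(t) = 2γ(t) - (‖γ(t)‖²/⟨γ(t), ν(t)⟩) ν(t) satisfies 𝒫r_γ(t) = Ψ(𝒫e_{Ψ∘γ}(t)), where 𝒫e_δ(t) = ⟨δ(t), ν_δ(t)⟩ ν_δ(t) is the pedal of the frontal δ with respect to its normal ν_δ, and Ψ∘γ has normal obtained from ν by the conformality of Ψ. -/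
set_option maxHeartbeats 1000000

/-- For a Legendrian curve (γ,ν) with the no-silhouette condition,
the primitive 𝒫r_γ(t) = 2γ(t) - (‖γ(t)‖²/⟨γ(t),ν(t)⟩) ν(t) equals
Ψ(𝒫e_{Ψ∘γ}(t)), where the normal ν_δ of δ = Ψ∘γ is obtained from ν via the
(conformal) differential of Ψ. -/
theorem stmt_5 (γ ν δ νδ : ℝ → ℝ × ℝ) (hγ : ContDiff ℝ (⊤ : ℕ∞) γ) (hν : ContDiff ℝ (⊤ : ℕ∞) ν)
    (hνunit : ∀ t, (ν t).1 ^ 2 + (ν t).2 ^ 2 = 1)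
    (hLeg : ∀ t, (deriv γ t).1 * (ν t).1 + (deriv γ t).2 * (ν t).2 = 0)
    (hne : ∀ t, γ t ≠ 0)
    (hdot : ∀ t, (γ t).1 * (ν t).1 + (γ t).2 * (ν t).2 ≠ 0)
    (Ψ : ℝ × ℝ → ℝ × ℝ)
    (hΨ : ∀ p : ℝ × ℝ, Ψ p = (p.1 / (p.1 ^ 2 + p.2 ^ 2), p.2 / (p.1 ^ 2 + p.2 ^ 2)))
    (hδ : ∀ t, δ t = Ψ (γ t))
    (hνδ : ∀ t, νδ t = ν t -
      (2 * ((γ t).1 * (ν t).1 + (γ t).2 * (ν t).2) / ((γ t).1 ^ 2 + (γ t).2 ^ 2)) • γ t) :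
    ∀ t, (2 : ℝ) • γ t
        - (((γ t).1 ^ 2 + (γ t).2 ^ 2) / ((γ t).1 * (ν t).1 + (γ t).2 * (ν t).2)) • ν t
      = Ψ (((δ t).1 * (νδ t).1 + (δ t).2 * (νδ t).2) • νδ t) := by
  intro t
  obtain ⟨a, b⟩ : ∃ a b, γ t = (a, b) := ⟨(γ t).1, (γ t).2, rfl⟩
  set a := (γ t).1 with ha
  set b := (γ t).2 with hb
  set n1 := (ν t).1 with hn1
  set n2 := (ν t).2 with hn2
  have hr : a ^ 2 + b ^ 2 ≠ 0 := by
    intro h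
    apply hne t
    have ha0 : a = 0 := by nlinarith [sq_nonneg a, sq_nonneg b]
    have hb0 : b = 0 := by nlinarith [sq_nonneg a, sq_nonneg b]
    exact Prod.ext ha0 hb0
  have hd : a * n1 + b * n2 ≠ 0 := hdot t
  have hn : n1 ^ 2 + n2 ^ 2 = 1 := hνunit t
  have hν1 : (νδ t).1 = n1 - 2 * (a * n1 + b * n2) / (a ^ 2 + b ^ 2) * a := by
    rw [hνδ]; simp [Prod.smul_def, smul_eq_mul]; rfl
  have hν2 : (νδ t).2 = n2 - 2 * (a * n1 + b * n2) / (a ^ 2 + b ^ 2) * b := by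
    rw [hνδ]; simp [Prod.smul_def, smul_eq_mul]; rfl
  have hδ1 : (δ t).1 = a / (a ^ 2 + b ^ 2) := by rw [hδ, hΨ]
  have hδ2 : (δ t).2 = b / (a ^ 2 + b ^ 2) := by rw [hδ, hΨ]
  -- the pedal scalar
  have hp : (δ t).1 * (νδ t).1 + (δ t).2 * (νδ t).2 = -(a * n1 + b * n2) / (a ^ 2 + b ^ 2) := by
    rw [hδ1, hδ2, hν1, hν2]; field_simp; ring
  have hun : (νδ t).1 ^ 2 + (νδ t).2 ^ 2 = 1 := by
    rw [hν1, hν2]; field_simp; nlinarith [hn]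
  set p : ℝ := -(a * n1 + b * n2) / (a ^ 2 + b ^ 2) with hpdef
  have hp0 : p ≠ 0 := by
    simp only [hpdef, div_ne_zero_iff, neg_ne_zero]; exact ⟨hd, hr⟩
  rw [hΨ, hp]
  have h1 : (p • νδ t).1 = p * (νδ t).1 := rfl
  have h2 : (p • νδ t).2 = p * (νδ t).2 := rfl
  have hnorm : (p • νδ t).1 ^ 2 + (p • νδ t).2 ^ 2 = p ^ 2 := by
    rw [h1, h2]; nlinarith [hun]
  rw [hnorm, h1, h2]
  have hcanc : ∀ x : ℝ, p * x / p ^ 2 = x / p := by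
    intro x
    rw [pow_two, mul_div_mul_left x p hp0]
  apply Prod.ext
  · show 2 * a - (a ^ 2 + b ^ 2) / (a * n1 + b * n2) * n1 = p * (νδ t).1 / p ^ 2
    rw [hcanc, eq_div_iff hp0, hν1, hpdef]
    field_simp
    ring
  · show 2 * b - (a ^ 2 + b ^ 2) / (a * n1 + b * n2) * n2 = p * (νδ t).2 / p ^ 2
    rw [hcanc, eq_div_iff hp0, hν2, hpdef]
    field_simp
    ring
end

section
/- Let C be the quadratic curve g(x,y) = a₁₁x² + a₂₂y² + 2a₁₂xy + 2a₁x + 2a₂y + c = 0. If a point (x₀, y₀) lies on C and (x, y) is the foot of the perpendicular from the origin to the tangent line of C at (x₀, y₀), then G₁[C](x,y) = 0, where G₁[C](x,y) = (a₁₂² - a₁₁a₂₂)(x²+y²)² + 2(a₁₂a₂ - a₁a₂₂)(x²+y²)x + 2(a₁a₁₂ - a₂a₁₁)(x²+y²)y + (a₂² - a₂₂c)x² + 2(a₁₂c - a₁a₂)xy + (a₁² - a₁₁c)y². -/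
/-- If (x₀,y₀) lies on the quadratic curve g = 0 and (x,y) is the foot
of the perpendicular from the origin to the tangent line at (x₀,y₀), then
G₁[C](x,y) = 0. -/
theorem stmt_7 (a11 a22 a12 a1 a2 c x₀ y₀ x y : ℝ)
    (hC : a11 * x₀ ^ 2 + a22 * y₀ ^ 2 + 2 * a12 * x₀ * y₀
        + 2 * a1 * x₀ + 2 * a2 * y₀ + c = 0)
    (hgrad : (a1 + a11 * x₀ + a12 * y₀, a2 + a12 * x₀ + a22 * y₀) ≠ (0, 0))
    (htang : (a1 + a11 * x₀ + a12 * y₀) * x + (a2 + a12 * x₀ + a22 * y₀) * y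
        + c + a1 * x₀ + a2 * y₀ = 0)
    (hfoot : ∃ t : ℝ, x = t * (a1 + a11 * x₀ + a12 * y₀)
        ∧ y = t * (a2 + a12 * x₀ + a22 * y₀)) :
    (a12 ^ 2 - a11 * a22) * (x ^ 2 + y ^ 2) ^ 2
      + 2 * (a12 * a2 - a1 * a22) * (x ^ 2 + y ^ 2) * x
      + 2 * (a1 * a12 - a2 * a11) * (x ^ 2 + y ^ 2) * y
      + (a2 ^ 2 - a22 * c) * x ^ 2 + 2 * (a12 * c - a1 * a2) * x * y
      + (a1 ^ 2 - a11 * c) * y ^ 2 = 0 := by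
  obtain ⟨t, hx, hy⟩ := hfoot
  subst hx hy
  set u := a1 + a11 * x₀ + a12 * y₀ with hu
  set v := a2 + a12 * x₀ + a22 * y₀ with hv
  linear_combination
    (t * ((a12 ^ 2 - a11 * a22) * ((t * u) ^ 2 + (t * v) ^ 2 - t * (c + a1 * x₀ + a2 * y₀))
      + t * (2 * (a12 * a2 - a1 * a22) * u + 2 * (a1 * a12 - a2 * a11) * v))) * htang
    + t ^ 2 * (a1 ^ 2 * a22 - 2 * a1 * a2 * a12 + a2 ^ 2 * a11
        + c * (a12 ^ 2 - a11 * a22)) * hC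
end

section
/- For (x,y) ≠ (0,0) and (X,Y) = Ψ(x,y) = (x/(x²+y²), y/(x²+y²)), the identity G₁[C](x,y) = (x²+y²)²·G₂[C](X,Y) holds (equivalently, G₁[C] ∘ Ψ⁻¹(X,Y) = 0 iff G₂[C](X,Y) = 0), where G₂[C](x,y) = (a₂² - a₂₂c)x² + (a₁² - a₁₁c)y² + 2(a₁₂c - a₁a₂)xy + 2(a₁₂a₂ - a₁a₂₂)x + 2(a₁a₁₂ - a₁₁a₂)y + a₁₂² - a₁₁a₂₂. -/
/-- For (x,y) ≠ (0,0) and (X,Y) = Ψ(x,y), one has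
G₁[C](x,y) = (x²+y²)² · G₂[C](X,Y). -/
theorem stmt_10 (a11 a22 a12 a1 a2 c x y : ℝ) (h : (x, y) ≠ ((0 : ℝ), (0 : ℝ)))
    (X Y : ℝ) (hX : X = x / (x ^ 2 + y ^ 2)) (hY : Y = y / (x ^ 2 + y ^ 2)) :
    (a12 ^ 2 - a11 * a22) * (x ^ 2 + y ^ 2) ^ 2
      + 2 * (a12 * a2 - a1 * a22) * (x ^ 2 + y ^ 2) * x
      + 2 * (a1 * a12 - a2 * a11) * (x ^ 2 + y ^ 2) * y
      + (a2 ^ 2 - a22 * c) * x ^ 2 + 2 * (a12 * c - a1 * a2) * x * y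
      + (a1 ^ 2 - a11 * c) * y ^ 2
    = (x ^ 2 + y ^ 2) ^ 2 *
      ((a2 ^ 2 - a22 * c) * X ^ 2 + (a1 ^ 2 - a11 * c) * Y ^ 2
        + 2 * (a12 * c - a1 * a2) * X * Y
        + 2 * (a12 * a2 - a1 * a22) * X + 2 * (a1 * a12 - a11 * a2) * Y
        + (a12 ^ 2 - a11 * a22)) := by
  have hr : x ^ 2 + y ^ 2 ≠ 0 := by
    intro h0
    apply h
    have hx : x = 0 := by nlinarith [sq_nonneg x, sq_nonneg y]
    have hy : y = 0 := by nlinarith [sq_nonneg x, sq_nonneg y]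
    simp [hx, hy]
  subst hX hY
  field_simp
  ring
end

section
/- For the quadratic polynomial G₂[C](x,y) = (a₂² - a₂₂c)x² + (a₁² - a₁₁c)y² + 2(a₁₂c - a₁a₂)xy + 2(a₁₂a₂ - a₁a₂₂)x + 2(a₁a₁₂ - a₁₁a₂)y + (a₁₂² - a₁₁a₂₂), its invariants satisfy Δ̂₀ = c·Δ and Δ̂ = -Δ², where Δ₀, Δ are the invariants of the original quadratic g(x,y) = a₁₁x² + a₂₂y² + 2a₁₂xy + 2a₁x + 2a₂y + c, and Δ̂₀, Δ̂ are the corresponding invariants of G₂[C]. -/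
/-- The invariants of the anti-pedal quadratic G₂[C] satisfy
Δhat₀ = cΔ and Δhat = -Δ². -/
theorem stmt_11 (a11 a22 a12 a1 a2 c : ℝ)
    (Δ : ℝ) (hΔ : Δ = (!![a11, a12, a1; a12, a22, a2; a1, a2, c]).det)
    (Δhat₀ : ℝ)
    (hΔhat₀ : Δhat₀ = (a2 ^ 2 - a22 * c) * (a1 ^ 2 - a11 * c) - (a12 * c - a1 * a2) ^ 2)
    (Δhat : ℝ)
    (hΔhat : Δhat = (!![a2 ^ 2 - a22 * c, a12 * c - a1 * a2, a12 * a2 - a1 * a22;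
                   a12 * c - a1 * a2, a1 ^ 2 - a11 * c, a1 * a12 - a11 * a2;
                   a12 * a2 - a1 * a22, a1 * a12 - a11 * a2, a12 ^ 2 - a11 * a22]).det) :
    Δhat₀ = c * Δ ∧ Δhat = -Δ ^ 2 := by
  subst hΔ hΔhat₀ hΔhat
  simp [Matrix.det_fin_three]
  constructor <;> ring
end

section
/- Let γ(t) = (cos θ · t - a sin θ · t² + b₁, sin θ · t + a cos θ · t² + b₂) with a ≠ 0 be a parabola, and suppose γ is unbounded so its inversion σ(τ) = Ψ∘γ at the parameter value corresponding to infinity, given by σ(τ) = ((cos θ τ³ - a sin θ τ² + b₁τ⁴)/f(τ), (sin θ τ³ + a cos θ τ² + b₂τ⁴)/f(τ)) with f(τ) = (cos θ τ - a sin θ + b₁τ²)² + (sin θ τ + a cos θ + b₂τ²)², satisfies σ(0) = (0,0), σ'(0) = 0, σ''(0) ≠ 0, and |σ''(0), σ'''(0)| = -12/a³ ≠ 0; hence σ has an ordinary cusp at τ = 0, with tangent direction (cos θ, sin θ), the axis direction of the parabola. -/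
/-!
With `P τ = τ² γ(1/τ) = a (-sin θ, cos θ) + τ (cos θ, sin θ) + τ² (b₁, b₂)` we have `f = |P|²`
and `σ τ = τ² • Ψ (P τ)`. Leibniz' rule for the factor `τ²` gives `σ 0 = σ' 0 = 0`,
`σ'' 0 = 2 Ψ (P 0)` and `σ''' 0 = 6 (Ψ ∘ P)' 0`. Since `P' 0 = (cos θ, sin θ)` is orthogonal
to `P 0`, the denominator `|P|²` is critical at `0`, so `(Ψ ∘ P)' 0 = P' 0 / a²`. Thus
`σ'' 0 = (2 / a) (-sin θ, cos θ)` and `σ''' 0 = (6 / a²) (cos θ, sin θ)`, whose determinant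
is `-12 / a³`.
-/

section SmulPow

variable {𝕜 F : Type*} [NontriviallyNormedField 𝕜] [NormedAddCommGroup F] [NormedSpace 𝕜 F]
  {h : 𝕜 → F}

open Finset in
theorem iteratedDeriv_pow_smul_zero {n : ℕ} (m : ℕ) (hh : ContDiffAt 𝕜 n h 0) :
    iteratedDeriv n (fun t => t ^ m • h t) 0 = n.descFactorial m • iteratedDeriv (n - m) h 0 := by
  have leibniz := iteratedDerivWithin_smul (Set.mem_univ (0 : 𝕜)) uniqueDiffOn_univ
    (f := fun t : 𝕜 => t ^ m) (by fun_prop) hh.contDiffWithinAt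
  simp only [iteratedDerivWithin_univ] at leibniz
  rw [show (fun t => t ^ m • h t) = (fun t : 𝕜 => t ^ m) • h from rfl, leibniz, sum_eq_single m]
  · rw [iteratedDeriv_fun_pow_zero, if_pos rfl, Nat.cast_smul_eq_nsmul, smul_smul,
      Nat.descFactorial_eq_factorial_mul_choose, mul_comm]
  · intro i _ him
    rw [iteratedDeriv_fun_pow_zero, if_neg him, Nat.cast_zero, zero_smul, smul_zero]
  · intro hm
    rw [Nat.choose_eq_zero_of_lt (by simpa using hm), zero_smul]

theorem deriv_sq_smul_zero (hh : ContDiffAt 𝕜 1 h 0) : deriv (fun t => t ^ 2 • h t) 0 = 0 := by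
  simpa using iteratedDeriv_pow_smul_zero 2 (n := 1) (mod_cast hh)

theorem deriv_deriv_sq_smul_zero (hh : ContDiffAt 𝕜 2 h 0) :
    deriv (deriv fun t => t ^ 2 • h t) 0 = (2 : ℕ) • h 0 := by
  simpa [iteratedDeriv_eq_iterate] using iteratedDeriv_pow_smul_zero 2 (n := 2) (mod_cast hh)

theorem deriv_deriv_deriv_sq_smul_zero (hh : ContDiffAt 𝕜 3 h 0) :
    deriv (deriv (deriv fun t => t ^ 2 • h t)) 0 = (6 : ℕ) • deriv h 0 := by
  simpa [iteratedDeriv_eq_iterate, Nat.descFactorial] using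
    iteratedDeriv_pow_smul_zero 2 (n := 3) (mod_cast hh)

end SmulPow

theorem HasDerivAt.inv_smul_of_hasDerivAt_zero {𝕜 F : Type*} [NontriviallyNormedField 𝕜]
    [NormedAddCommGroup F] [NormedSpace 𝕜 F] {D : 𝕜 → 𝕜} {P : 𝕜 → F} {P' : F} {x : 𝕜}
    (hD : HasDerivAt D 0 x) (hP : HasDerivAt P P' x) (hDx : D x ≠ 0) :
    HasDerivAt (fun t => (D t)⁻¹ • P t) ((D x)⁻¹ • P') x :=
  ((hD.inv hDx).smul hP).congr_deriv (by simp)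

theorem hasDerivAt_mul_add_add_mul_sq {𝕜 : Type*} [NontriviallyNormedField 𝕜] (q p r x : 𝕜) :
    HasDerivAt (fun t => q * t + p + r * t ^ 2) (q + r * (2 * x)) x := by
  simpa using (((hasDerivAt_id x).const_mul q).add_const p).fun_add
    ((hasDerivAt_pow 2 x).const_mul r)

-- `τ² γ(1/τ)`
noncomputable def homogenizedParabola (a b₁ b₂ θ τ : ℝ) : ℝ × ℝ :=
  (Real.cos θ * τ - a * Real.sin θ + b₁ * τ ^ 2, Real.sin θ * τ + a * Real.cos θ + b₂ * τ ^ 2)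

noncomputable def invertedHomogenizedParabola (a b₁ b₂ θ τ : ℝ) : ℝ × ℝ :=
  ((homogenizedParabola a b₁ b₂ θ τ).1 ^ 2 + (homogenizedParabola a b₁ b₂ θ τ).2 ^ 2)⁻¹ •
    homogenizedParabola a b₁ b₂ θ τ

section HomogenizedParabola

variable (a b₁ b₂ θ : ℝ)

theorem homogenizedParabola_zero :
    homogenizedParabola a b₁ b₂ θ 0 = (-(a * Real.sin θ), a * Real.cos θ) := by
  simp [homogenizedParabola]

theorem contDiff_homogenizedParabola : ContDiff ℝ ⊤ (homogenizedParabola a b₁ b₂ θ) := by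
  unfold homogenizedParabola; fun_prop

theorem hasDerivAt_homogenizedParabola_fst :
    HasDerivAt (fun τ => (homogenizedParabola a b₁ b₂ θ τ).1) (Real.cos θ) 0 := by
  simpa [homogenizedParabola, sub_eq_add_neg] using
    hasDerivAt_mul_add_add_mul_sq (Real.cos θ) (-(a * Real.sin θ)) b₁ 0

theorem hasDerivAt_homogenizedParabola_snd :
    HasDerivAt (fun τ => (homogenizedParabola a b₁ b₂ θ τ).2) (Real.sin θ) 0 := by
  simpa [homogenizedParabola] using
    hasDerivAt_mul_add_add_mul_sq (Real.sin θ) (a * Real.cos θ) b₂ 0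

theorem normSq_homogenizedParabola_zero :
    (homogenizedParabola a b₁ b₂ θ 0).1 ^ 2 + (homogenizedParabola a b₁ b₂ θ 0).2 ^ 2 = a ^ 2 := by
  rw [homogenizedParabola_zero]
  linear_combination a ^ 2 * Real.sin_sq_add_cos_sq θ

theorem hasDerivAt_normSq_homogenizedParabola :
    HasDerivAt (fun τ => (homogenizedParabola a b₁ b₂ θ τ).1 ^ 2
      + (homogenizedParabola a b₁ b₂ θ τ).2 ^ 2) 0 0 := by
  refine (((hasDerivAt_homogenizedParabola_fst a b₁ b₂ θ).fun_pow 2).fun_add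
    ((hasDerivAt_homogenizedParabola_snd a b₁ b₂ θ).fun_pow 2)).congr_deriv ?_
  simp only [homogenizedParabola_zero]
  ring

theorem invertedHomogenizedParabola_zero :
    invertedHomogenizedParabola a b₁ b₂ θ 0 = (a ^ 2)⁻¹ • (-(a * Real.sin θ), a * Real.cos θ) := by
  rw [invertedHomogenizedParabola, normSq_homogenizedParabola_zero, homogenizedParabola_zero]

theorem sq_smul_invertedHomogenizedParabola (τ : ℝ) :
    τ ^ 2 • invertedHomogenizedParabola a b₁ b₂ θ τ =
      ((Real.cos θ * τ ^ 3 - a * Real.sin θ * τ ^ 2 + b₁ * τ ^ 4) /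
          ((Real.cos θ * τ - a * Real.sin θ + b₁ * τ ^ 2) ^ 2
            + (Real.sin θ * τ + a * Real.cos θ + b₂ * τ ^ 2) ^ 2),
        (Real.sin θ * τ ^ 3 + a * Real.cos θ * τ ^ 2 + b₂ * τ ^ 4) /
          ((Real.cos θ * τ - a * Real.sin θ + b₁ * τ ^ 2) ^ 2
            + (Real.sin θ * τ + a * Real.cos θ + b₂ * τ ^ 2) ^ 2)) := by
  ext <;> simp only [invertedHomogenizedParabola, homogenizedParabola, Prod.smul_fst,
    Prod.smul_snd, smul_eq_mul] <;> ring

variable {a}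

theorem contDiffAt_invertedHomogenizedParabola (ha : a ≠ 0) :
    ContDiffAt ℝ ⊤ (invertedHomogenizedParabola a b₁ b₂ θ) 0 := by
  have hP := contDiff_homogenizedParabola a b₁ b₂ θ
  have hD : ContDiff ℝ ⊤ fun τ => (homogenizedParabola a b₁ b₂ θ τ).1 ^ 2
      + (homogenizedParabola a b₁ b₂ θ τ).2 ^ 2 := by fun_prop
  refine (hD.contDiffAt.inv ?_).smul hP.contDiffAt
  rw [normSq_homogenizedParabola_zero]
  positivity

theorem hasDerivAt_invertedHomogenizedParabola (ha : a ≠ 0) :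
    HasDerivAt (invertedHomogenizedParabola a b₁ b₂ θ)
      ((a ^ 2)⁻¹ • (Real.cos θ, Real.sin θ)) 0 := by
  have h := (hasDerivAt_normSq_homogenizedParabola a b₁ b₂ θ).inv_smul_of_hasDerivAt_zero
    ((hasDerivAt_homogenizedParabola_fst a b₁ b₂ θ).prodMk
      (hasDerivAt_homogenizedParabola_snd a b₁ b₂ θ))
    (by rw [normSq_homogenizedParabola_zero]; positivity)
  rwa [normSq_homogenizedParabola_zero] at h

end HomogenizedParabola

/-- The inversion σ of a parabola, parametrized near the point at
infinity, satisfies σ(0) = 0, σ'(0) = 0, σ''(0) ≠ 0 and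
|σ''(0), σ'''(0)| = -12/a³ ≠ 0; hence σ has an ordinary cusp at τ = 0. -/
theorem stmt_15 (a b₁ b₂ θ : ℝ) (ha : a ≠ 0) (f : ℝ → ℝ) (σ : ℝ → ℝ × ℝ)
    (hf : ∀ τ, f τ = (Real.cos θ * τ - a * Real.sin θ + b₁ * τ ^ 2) ^ 2
        + (Real.sin θ * τ + a * Real.cos θ + b₂ * τ ^ 2) ^ 2)
    (hσ : ∀ τ, σ τ =
      ((Real.cos θ * τ ^ 3 - a * Real.sin θ * τ ^ 2 + b₁ * τ ^ 4) / f τ,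
       (Real.sin θ * τ ^ 3 + a * Real.cos θ * τ ^ 2 + b₂ * τ ^ 4) / f τ)) :
    σ 0 = (0, 0) ∧ deriv σ 0 = 0 ∧ deriv (deriv σ) 0 ≠ 0 ∧
      (deriv (deriv σ) 0).1 * (deriv (deriv (deriv σ)) 0).2
        - (deriv (deriv σ) 0).2 * (deriv (deriv (deriv σ)) 0).1 = -12 / a ^ 3 ∧
      (-12 / a ^ 3 : ℝ) ≠ 0 := by
  have hσ_eq : σ = fun τ => τ ^ 2 • invertedHomogenizedParabola a b₁ b₂ θ τ :=
    funext fun τ => by rw [hσ, hf, sq_smul_invertedHomogenizedParabola]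
  have hQ := contDiffAt_invertedHomogenizedParabola b₁ b₂ θ ha
  have hσ₂ : deriv (deriv σ) 0 = (-2 * Real.sin θ / a, 2 * Real.cos θ / a) := by
    rw [hσ_eq, deriv_deriv_sq_smul_zero (hQ.of_le le_top), invertedHomogenizedParabola_zero]
    simp only [Prod.smul_mk, smul_eq_mul, nsmul_eq_mul, Nat.cast_ofNat, Prod.mk.injEq]
    constructor <;> field_simp
  have hσ₃ : deriv (deriv (deriv σ)) 0 = (6 * Real.cos θ / a ^ 2, 6 * Real.sin θ / a ^ 2) := by
    rw [hσ_eq, deriv_deriv_deriv_sq_smul_zero (hQ.of_le le_top),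
      (hasDerivAt_invertedHomogenizedParabola b₁ b₂ θ ha).deriv]
    simp only [Prod.smul_mk, smul_eq_mul, nsmul_eq_mul, Nat.cast_ofNat, Prod.mk.injEq]
    constructor <;> field_simp
  have hdet : (deriv (deriv σ) 0).1 * (deriv (deriv (deriv σ)) 0).2
      - (deriv (deriv σ) 0).2 * (deriv (deriv (deriv σ)) 0).1 = -12 / a ^ 3 := by
    rw [hσ₂, hσ₃]
    field_simp
    linear_combination (-12) * Real.sin_sq_add_cos_sq θ
  have hne : (-12 / a ^ 3 : ℝ) ≠ 0 := by simpa using ha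
  refine ⟨by simp [hσ], hσ_eq ▸ deriv_sq_smul_zero (hQ.of_le le_top), fun h₀ => hne ?_, hdet, hne⟩
  rw [← hdet, h₀, Prod.fst_zero, Prod.snd_zero, zero_mul, zero_mul, sub_zero]
end

section
/- For the quadratic curve 𝓘(𝓒): (r²-a²)x² + (r²-b²)y² - 2abxy + 2(ax+by) - 1 = 0 (the inversion of the limaçon that is the pedal of the circle (x-a)²+(y-b)²=r²), the invariants are Δ₀ = r²(r² - a² - b²) and Δ = -r⁴. Consequently this curve is a parabola iff a²+b² = r², an ellipse iff a²+b² < r², and a hyperbola iff a²+b² > r². -/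
/-- For the quadratic (r²-a²)x² + (r²-b²)y² - 2abxy + 2(ax+by) - 1 = 0
(the inversion of the limaçon), Δ₀ = r²(r²-a²-b²) and Δ = -r⁴; hence it is a
parabola iff a²+b² = r², an ellipse iff a²+b² < r², and a hyperbola iff a²+b² > r². -/
theorem stmt_18 (a b r : ℝ) (hr : 0 < r)
    (Δ₀ : ℝ) (hΔ₀ : Δ₀ = (r ^ 2 - a ^ 2) * (r ^ 2 - b ^ 2) - (-(a * b)) ^ 2)
    (Δ : ℝ) (hΔ : Δ = (!![r ^ 2 - a ^ 2, -(a * b), a;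
                          -(a * b), r ^ 2 - b ^ 2, b;
                          a, b, (-1 : ℝ)]).det) :
    Δ₀ = r ^ 2 * (r ^ 2 - a ^ 2 - b ^ 2) ∧ Δ = -r ^ 4 ∧
      ((Δ₀ = 0 ∧ Δ ≠ 0) ↔ a ^ 2 + b ^ 2 = r ^ 2) ∧
      ((0 < Δ₀ ∧ (r ^ 2 - a ^ 2) * Δ < 0) ↔ a ^ 2 + b ^ 2 < r ^ 2) ∧
      ((Δ₀ < 0 ∧ Δ ≠ 0) ↔ r ^ 2 < a ^ 2 + b ^ 2) := by
  have hr2 : 0 < r ^ 2 := by positivity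
  have hr4 : 0 < r ^ 4 := by positivity
  have hD0 : Δ₀ = r ^ 2 * (r ^ 2 - a ^ 2 - b ^ 2) := by rw [hΔ₀]; ring
  have hD : Δ = -r ^ 4 := by
    rw [hΔ, Matrix.det_fin_three]
    simp [Matrix.cons_val_zero, Matrix.cons_val_one]
    ring
  refine ⟨hD0, hD, ?_, ?_, ?_⟩
  · constructor
    · rintro ⟨h0, _⟩
      rw [hD0] at h0
      have : r ^ 2 - a ^ 2 - b ^ 2 = 0 := by
        rcases mul_eq_zero.mp h0 with h | h
        · linarith
        · exact h
      linarith
    · intro h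
      constructor
      · rw [hD0]; nlinarith
      · rw [hD]; nlinarith
  · constructor
    · rintro ⟨h0, h1⟩
      rw [hD0] at h0
      nlinarith
    · intro h
      refine ⟨by rw [hD0]; nlinarith, ?_⟩
      rw [hD]
      have : 0 < r ^ 2 - a ^ 2 := by nlinarith [sq_nonneg b]
      nlinarith
  · constructor
    · rintro ⟨h0, _⟩
      rw [hD0] at h0
      nlinarith
    · intro h
      exact ⟨by rw [hD0]; nlinarith, by rw [hD]; nlinarith⟩
end
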